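/- arXiv:2509.06127 — 4 statements merged into one kernel-verified Lean document; each statement's English description precedes it below -/
import Mathlib

section
/- Let N be an odd positive integer and let x, y, r, r' ∈ ZMod N. Let c and c' be the images in ZMod N of two distinct integers from {-1, 0, 1}. If r + c·x = y and r' + c'·x = y (i.e., both responses verify against the same commitment exponent y), then x = (r − r')·(c' − c)⁻¹. -/
lemma two_unit (N : ℕ) (hodd : Odd N) : IsUnit (2 : ZMod N) := by
  have h : ((2 : ℕ) : ZMod N) = (2 : ZMod N) := by push_cast; ring
  rw [← h, ZMod.isUnit_iff_coprime]
  exact Nat.coprime_two_left.mpr hodd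

theorem stmt_1 (N : ℕ) (hN : 0 < N) (hodd : Odd N)
    (x y r r' : ZMod N)
    (a b : ℤ)
    (ha : a = -1 ∨ a = 0 ∨ a = 1)
    (hb : b = -1 ∨ b = 0 ∨ b = 1)
    (hab : a ≠ b)
    (h1 : r + (a : ZMod N) * x = y)
    (h2 : r' + (b : ZMod N) * x = y) :
    x = (r - r') * ((b : ZMod N) - (a : ZMod N))⁻¹ := by
  have key : ((b : ZMod N) - (a : ZMod N)) * x = r - r' := by
    linear_combination h2 - h1
  have hu : IsUnit ((b : ZMod N) - (a : ZMod N)) := by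
    have h2u := two_unit N hodd
    rcases ha with rfl | rfl | rfl <;> rcases hb with rfl | rfl | rfl <;>
      simp only [Int.cast_neg, Int.cast_one, Int.cast_zero, sub_neg_eq_add,
        zero_sub, sub_zero, sub_self, neg_neg, zero_add, add_zero] <;>
      first
      | exact absurd rfl hab
      | exact isUnit_one
      | exact isUnit_one.neg
      | exact (by norm_num : (1 : ZMod N) + 1 = 2) ▸ h2u
      | exact (by push_cast; ring : (-1 : ZMod N) - 1 = -2) ▸ h2u.neg
  calc x = (((b : ZMod N) - a)⁻¹ * ((b : ZMod N) - a)) * x := by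
        rw [ZMod.inv_mul_of_unit _ hu, one_mul]
    _ = (r - r') * ((b : ZMod N) - a)⁻¹ := by rw [mul_assoc, key]; ring
end

section
/- Perfect completeness of the base OR sigma protocol. Let N be an odd positive integer, n : ℕ, and E a type with an AddTorsor (ZMod N) E structure and base point E0 : E; define pow(P, e) := e • (P −ᵥ E0) +ᵥ E0. Let δ ∈ {0, 1}, let x_δ ∈ ZMod N with X_δ := x_δ +ᵥ E0, and let X_{1−δ} : E be arbitrary. Let c, c_{1−δ} : Fin n → ZMod N where each c i is the image of an integer in {-1, 0, 1} and each c_{1−δ} i is the image of an integer in {-1, 1}. Let y_δ, r_{1−δ} : Fin n → ZMod N, and define the commitments Y_δ i := y_δ i +ᵥ E0 and Y_{1−δ} i := r_{1−δ} i +ᵥ pow(X_{1−δ}, c_{1−δ} i), the derived challenge c_δ i := c i · c_{1−δ} i, and the response r_δ i := y_δ i − x_δ · c_δ i. Then for every i : Fin n, (a) c_0 i · c_1 i = c i, and (b) for each b ∈ {0, 1}, Y_b i = r_b i +ᵥ pow(X_b, c_b i). -/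
/-- The "twist power" of a point `P` of the torsor `E` with base point `E0`:
`pow E0 P e = e • (P -ᵥ E0) +ᵥ E0`. -/
def actPow {N : ℕ} {E : Type*} [AddTorsor (ZMod N) E] (E0 : E) (P : E) (e : ZMod N) : E :=
  e • (P -ᵥ E0) +ᵥ E0

theorem stmt_2 (N : ℕ) (hN : 0 < N) (hodd : Odd N) (n : ℕ)
    (E : Type*) [AddTorsor (ZMod N) E] (E0 : E)
    (δ : Fin 2) (xδ : ZMod N) (X : Fin 2 → E)
    (hX : X δ = xδ +ᵥ E0)
    (c cother : Fin n → ZMod N)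
    (hc : ∀ i, ∃ m : ℤ, (m = -1 ∨ m = 0 ∨ m = 1) ∧ c i = (m : ZMod N))
    (hcother : ∀ i, ∃ m : ℤ, (m = -1 ∨ m = 1) ∧ cother i = (m : ZMod N))
    (yδ rother : Fin n → ZMod N)
    (Y : Fin 2 → Fin n → E)
    (hYδ : ∀ i, Y δ i = yδ i +ᵥ E0)
    (hYother : ∀ i, Y (1 - δ) i = rother i +ᵥ actPow E0 (X (1 - δ)) (cother i))
    (ch resp : Fin 2 → Fin n → ZMod N)
    (hchδ : ∀ i, ch δ i = c i * cother i)
    (hchother : ∀ i, ch (1 - δ) i = cother i)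
    (hrespδ : ∀ i, resp δ i = yδ i - xδ * ch δ i)
    (hrespother : ∀ i, resp (1 - δ) i = rother i) :
    ∀ i : Fin n,
      ch 0 i * ch 1 i = c i ∧
      ∀ b : Fin 2, Y b i = resp b i +ᵥ actPow E0 (X b) (ch b i) := by
  intro i
  have hsq : cother i * cother i = 1 := by
    obtain ⟨m', hm', hmc'⟩ := hcother i
    rcases hm' with h | h <;> subst h <;> simp [hmc']
  have hdel : Y δ i = resp δ i +ᵥ actPow E0 (X δ) (ch δ i) := by
    rw [hYδ, hrespδ, hX, actPow, vadd_vsub, smul_eq_mul, vadd_vadd]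
    congr 1
    ring
  have hoth : Y (1 - δ) i = resp (1 - δ) i +ᵥ actPow E0 (X (1 - δ)) (ch (1 - δ) i) := by
    rw [hYother, hrespother, hchother]
  have hd : δ = 0 ∨ δ = 1 := by omega
  have key : ∀ b : Fin 2, Y b i = resp b i +ᵥ actPow E0 (X b) (ch b i) := by
    intro b
    have hb : b = 0 ∨ b = 1 := by omega
    rcases hd with h | h <;> rcases hb with h' | h' <;> subst h <;> subst h'
    · exact hdel
    · exact hoth
    · exact hoth
    · exact hdel
  refine ⟨?_, key⟩
  rcases hd with h | h <;> subst h
  · rw [hchδ i, show (ch 1 i = cother i) from hchother i,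
      mul_assoc, hsq, mul_one]
  · rw [hchδ i, show (ch 0 i = cother i) from hchother i]
    calc cother i * (c i * cother i) = c i * (cother i * cother i) := by ring
      _ = c i := by rw [hsq, mul_one]
end

section
/- Special soundness of the base OR sigma protocol. Let N be an odd positive integer, n : ℕ, and E a type with an AddTorsor (ZMod N) E structure and base point E0 : E; define pow(P, e) := e • (P −ᵥ E0) +ᵥ E0. Let X_0, X_1 : E and Y_0, Y_1 : Fin n → E. Suppose we have two accepting transcripts sharing the commitments (Y_0, Y_1): challenges c, c' : Fin n → ZMod N with c ≠ c', and responses r_0, r_1, c_0, c_1 and r'_0, r'_1, c'_0, c'_1 : Fin n → ZMod N, where every value of c_0, c_1, c'_0, c'_1 is the image of an integer in {-1, 0, 1}, such that for all i: c_0 i · c_1 i = c i, c'_0 i · c'_1 i = c' i, and for each b ∈ {0, 1}: Y_b i = r_b i +ᵥ pow(X_b, c_b i) and Y_b i = r'_b i +ᵥ pow(X_b, c'_b i). Then there exist b ∈ {0, 1} and i : Fin n with c_b i ≠ c'_b i, and for every such pair (b, i) one has X_b = ((r_b i − r'_b i)·(c'_b i − c_b i)⁻¹) +ᵥ E0. 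-/
lemma unit_diff {N : ℕ} (hodd : Odd N) (a b : ZMod N) (m m' : ℤ)
    (hm : m = -1 ∨ m = 0 ∨ m = 1) (hm' : m' = -1 ∨ m' = 0 ∨ m' = 1)
    (ha : a = (m : ZMod N)) (hb : b = (m' : ZMod N)) (hne : a ≠ b) :
    IsUnit (b - a) := by
  have h2 : IsUnit (2 : ZMod N) := by
    have : IsUnit ((2 : ℕ) : ZMod N) :=
      (ZMod.isUnit_iff_coprime 2 N).2 (Nat.coprime_two_left.2 hodd)
    simpa using this
  subst ha hb
  rcases hm with rfl | rfl | rfl <;> rcases hm' with rfl | rfl | rfl <;>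
    simp_all <;> push_cast <;> ring_nf <;>
    first
      | exact isUnit_one
      | exact isUnit_one.neg
      | exact h2
      | exact h2.neg
      | simpa using h2
      | simpa using h2.neg

theorem stmt_3 (N : ℕ) (hN : 0 < N) (hodd : Odd N) (n : ℕ)
    (E : Type*) [AddTorsor (ZMod N) E] (E0 : E)
    (X : Fin 2 → E) (Y : Fin 2 → Fin n → E)
    (c c' : Fin n → ZMod N) (hcc' : c ≠ c')
    (r r' ch ch' : Fin 2 → Fin n → ZMod N)
    (hch : ∀ b i, ∃ m : ℤ, (m = -1 ∨ m = 0 ∨ m = 1) ∧ ch b i = (m : ZMod N))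
    (hch' : ∀ b i, ∃ m : ℤ, (m = -1 ∨ m = 0 ∨ m = 1) ∧ ch' b i = (m : ZMod N))
    (hmul : ∀ i, ch 0 i * ch 1 i = c i)
    (hmul' : ∀ i, ch' 0 i * ch' 1 i = c' i)
    (hver : ∀ b i, Y b i = r b i +ᵥ actPow E0 (X b) (ch b i))
    (hver' : ∀ b i, Y b i = r' b i +ᵥ actPow E0 (X b) (ch' b i)) :
    (∃ b : Fin 2, ∃ i : Fin n, ch b i ≠ ch' b i) ∧
    (∀ (b : Fin 2) (i : Fin n), ch b i ≠ ch' b i →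
      X b = ((r b i - r' b i) * (ch' b i - ch b i)⁻¹) +ᵥ E0) := by
  constructor
  · by_contra h
    push_neg at h
    apply hcc'
    funext i
    rw [← hmul i, ← hmul' i, h 0 i, h 1 i]
  · intro b i hne
    set d : ZMod N := X b -ᵥ E0 with hd
    have heq : (r b i + ch b i * d) +ᵥ E0 = (r' b i + ch' b i * d) +ᵥ E0 := by
      have h1 := hver b i
      have h2 := hver' b i
      rw [actPow] at h1 h2
      rw [← hd] at h1 h2
      rw [vadd_vadd] at h1 h2
      simpa [smul_eq_mul] using h1.symm.trans h2
    have heq' : r b i + ch b i * d = r' b i + ch' b i * d := vadd_right_cancel E0 heq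
    have hkey : (ch' b i - ch b i) * d = r b i - r' b i := by linear_combination -heq'
    obtain ⟨m, hm, hma⟩ := hch b i
    obtain ⟨m', hm', hmb⟩ := hch' b i
    have hu : IsUnit (ch' b i - ch b i) := unit_diff hodd _ _ m m' hm hm' hma hmb hne
    have : (r b i - r' b i) * (ch' b i - ch b i)⁻¹ = d := by
      rw [← hkey, mul_comm (ch' b i - ch b i) d, mul_assoc,
        ZMod.mul_inv_of_unit _ hu, mul_one]
    rw [this, hd, vsub_vadd]
end

section
/- Let N be an odd integer with N ≥ 3 and let c*, c̃, r*, r̃ ∈ ZMod N with c* a unit. Suppose there exists v₀ ∈ ZMod N with (v₀ = 1 ∨ v₀ = −1) and c̃ = c*·v₀. Then there exists a unique pair (v, w) ∈ ZMod N × ZMod N such that (v = 1 ∨ v = −1), c̃ = c*·v, and r̃ = w + r*·v. -/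
theorem stmt_7 (N : ℕ) (hN : 3 ≤ N) (hodd : Odd N)
    (cstar ctilde rstar rtilde : ZMod N)
    (hcs : IsUnit cstar)
    (hv : ∃ v0 : ZMod N, (v0 = 1 ∨ v0 = -1) ∧ ctilde = cstar * v0) :
    ∃! p : ZMod N × ZMod N,
      (p.1 = 1 ∨ p.1 = -1) ∧ ctilde = cstar * p.1 ∧ rtilde = p.2 + rstar * p.1 := by
  obtain ⟨v0, hv0, hceq⟩ := hv
  refine ⟨(v0, rtilde - rstar * v0), ⟨hv0, hceq, by ring⟩, ?_⟩
  rintro ⟨v, w⟩ ⟨_, hc, hr⟩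
  have hveq : v = v0 := hcs.mul_left_cancel (hc.symm.trans hceq)
  subst hveq
  have : w = rtilde - rstar * v := by rw [hr]; ring
  simp [this]
end
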